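/- arXiv:2311.00774 — 4 statements merged into one kernel-verified Lean document; each statement's English description precedes it below -/
import Mathlib

section
/- Let S_cal be N exchangeable real-valued scores together with a test score S_test (all N+1 exchangeable and almost surely distinct). Let q̂ be the ⌈(N+1)(1−α)⌉-th smallest value of S_cal. Then P(S_test ≤ q̂) ≥ 1 − α. -/
/-!
For `k ≥ 1`, the test score lies below the `k`-th smallest calibration score exactly when
fewer than `k` of all `N + 1` scores are strictly below it, i.e. when its rank is `< k`.
By exchangeability every score has the same probability `p` of having rank `< k`, and since
the scores are a.s. distinct, exactly `k` of them do; summing gives `(N + 1) p = k`, and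
`k = ⌈(N + 1)(1 - α)⌉ ≥ (N + 1)(1 - α)`.
-/

open MeasureTheory

/-- The `k`-th smallest value (1-indexed) of a finite family of reals. -/
noncomputable def kthSmallest {N : ℕ} (g : Fin N → ℝ) (k : ℕ) : ℝ :=
  ((List.ofFn g).mergeSort (· ≤ ·)).getD (k - 1) 0

open Finset ENNReal

section Rank

variable {ι α : Type*} [Fintype ι]

/-- For injective `g`, the 0-indexed position of `g j` in increasing order. -/
def rank [Preorder α] [DecidableLT α] (g : ι → α) (j : ι) : ℕ := #{i | g i < g j}

section Preorder

variable [Preorder α] [DecidableLT α]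

lemma rank_comp_equiv {κ : Type*} [Fintype κ] (g : ι → α) (σ : κ ≃ ι) (j : κ) :
    rank (g ∘ σ) j = rank g (σ j) :=
  card_equiv σ fun i => by simp

lemma rank_lt_rank {g : ι → α} {i j : ι} (h : g i < g j) : rank g i < rank g j :=
  card_lt_card <| (ssubset_iff_of_subset fun l hl => by
      simp only [mem_filter, mem_univ, true_and] at hl ⊢; exact hl.trans h).2
    ⟨i, by simpa using h, by simp⟩

lemma rank_lt_card (g : ι → α) (j : ι) : rank g j < Fintype.card ι :=
  card_lt_univ_of_notMem (x := j) (by simp)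

end Preorder

variable [LinearOrder α]

lemma rank_injective {g : ι → α} (hg : Function.Injective g) : Function.Injective (rank g) := by
  intro i j hij
  by_contra hne
  rcases (hg.ne hne).lt_or_gt with h | h
  · exact (rank_lt_rank h).ne hij
  · exact (rank_lt_rank h).ne' hij

lemma card_rank_lt {g : ι → α} (hg : Function.Injective g) {k : ℕ} (hk : k ≤ Fintype.card ι) :
    #{j | rank g j < k} = k := by
  let r : ι → Fin (Fintype.card ι) := fun j => ⟨rank g j, rank_lt_card g j⟩
  have hr : Function.Bijective r :=
    (Fintype.bijective_iff_injective_and_card r).2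
      ⟨fun i j h => rank_injective hg (Fin.val_eq_of_eq h), (Fintype.card_fin _).symm⟩
  rw [card_equiv (Equiv.ofBijective r hr) (t := {m : Fin (Fintype.card ι) | (m : ℕ) < k})
    fun j => by simp [r], Fin.card_filter_val_lt, min_eq_right hk]

end Rank

section KthSmallest

variable {n : ℕ}

lemma mergeSort_ofFn (h : Fin n → ℝ) :
    (List.ofFn h).mergeSort (· ≤ ·) = List.ofFn (h ∘ Tuple.sort h) :=
  List.Perm.eq_of_sortedLE List.sortedLE_mergeSort (Tuple.monotone_sort h).sortedLE_ofFn
    ((List.mergeSort_perm _ _).trans ((Tuple.sort h).ofFn_comp_perm h).symm)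

lemma kthSmallest_eq_sort (h : Fin n → ℝ) {k : ℕ} (hk₁ : 1 ≤ k) (hkn : k ≤ n) :
    kthSmallest h k = h (Tuple.sort h ⟨k - 1, by omega⟩) := by
  rw [kthSmallest, mergeSort_ofFn, List.getD_eq_getElem _ _ (by simp; omega), List.getElem_ofFn]
  rfl

lemma le_kthSmallest_iff (h : Fin n → ℝ) (x : ℝ) {k : ℕ} (hk₁ : 1 ≤ k) (hkn : k ≤ n) :
    x ≤ kthSmallest h k ↔ #{i | h i < x} < k := by
  have hsorted : #{i | (h ∘ Tuple.sort h) i < x} = #{i | h i < x} :=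
    card_equiv (Tuple.sort h) fun i => by simp
  rw [kthSmallest_eq_sort h hk₁ hkn, ← hsorted, ← not_lt, ← Function.comp_apply (f := h),
    ← Fin.lt_card_filter_univ_iff_apply_of_imp _
      fun i j hji hi => ((Tuple.monotone_sort h) hji).trans_lt hi]
  simp only [not_lt]
  omega

lemma last_le_kthSmallest_iff (g : Fin (n + 1) → ℝ) {k : ℕ} (hk₁ : 1 ≤ k) (hkn : k ≤ n) :
    g (Fin.last n) ≤ kthSmallest (fun i : Fin n => g i.castSucc) k ↔ rank g (Fin.last n) < k := by
  rw [le_kthSmallest_iff _ _ hk₁ hkn, rank, ← card_map Fin.castSuccEmb]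
  congr! 2
  ext i
  simp only [mem_map, mem_filter, mem_univ, true_and, Fin.castSuccEmb_apply]
  refine ⟨fun ⟨j, hj, hji⟩ => hji ▸ hj, fun hi => ?_⟩
  obtain ⟨j, rfl⟩ := Fin.exists_castSucc_eq.2 (ne_of_apply_ne g hi.ne)
  exact ⟨j, hi, rfl⟩

end KthSmallest

section Exchangeable

variable {Ω ι α : Type*} [MeasurableSpace Ω] [Fintype ι]

open scoped Classical in
lemma sum_measure_eq_of_ae_card_eq {μ : Measure Ω} {E : ι → Set Ω}
    (hE : ∀ j, MeasurableSet (E j)) {k : ℕ} (h : ∀ᵐ ω ∂μ, #{j | ω ∈ E j} = k) :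
    ∑ j, μ (E j) = k * μ Set.univ := calc
  ∑ j, μ (E j) = ∑ j, ∫⁻ ω, (E j).indicator 1 ω ∂μ := by
    simp_rw [lintegral_indicator_one (hE _)]
  _ = ∫⁻ ω, ∑ j, (E j).indicator 1 ω ∂μ :=
    (lintegral_finsetSum _ fun j _ => measurable_one.indicator (hE j)).symm
  _ = ∫⁻ _, (k : ℝ≥0∞) ∂μ := lintegral_congr_ae <| h.mono fun ω hω => by
    simp_rw [Set.indicator_apply, Pi.one_apply, sum_boole, hω]
  _ = k * μ Set.univ := lintegral_const _

variable [TopologicalSpace α] [LinearOrder α] [OrderClosedTopology α] [SecondCountableTopology α]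
  [MeasurableSpace α] [OpensMeasurableSpace α]

lemma measurable_rank (j : ι) : Measurable fun g : ι → α => rank g j := by
  simp_rw [rank, card_filter]
  exact Finset.measurable_sum _ fun i _ => Measurable.ite
    (measurableSet_lt (measurable_pi_apply i) (measurable_pi_apply j)) measurable_const
    measurable_const

variable {P : Measure Ω} {X : Ω → ι → α}

lemma measure_rank_lt_eq_of_exchangeable (hX : Measurable X)
    (hexch : ∀ σ : Equiv.Perm ι, P.map (fun ω => X ω ∘ σ) = P.map X) (i j : ι) (k : ℕ) :
    P {ω | rank (X ω) i < k} = P {ω | rank (X ω) j < k} := by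
  classical
  have hset : MeasurableSet {g : ι → α | rank g j < k} := measurable_rank j measurableSet_Iio
  have hXσ : Measurable fun ω => X ω ∘ Equiv.swap i j :=
    measurable_pi_lambda _ fun l => measurable_pi_apply _ |>.comp hX
  have := congrArg (· {g | rank g j < k}) (hexch (Equiv.swap i j))
  simp only [Measure.map_apply hXσ hset, Measure.map_apply hX hset] at this
  simpa [Set.preimage, rank_comp_equiv] using this

theorem card_mul_measure_rank_lt [IsProbabilityMeasure P] (hX : Measurable X)
    (hexch : ∀ σ : Equiv.Perm ι, P.map (fun ω => X ω ∘ σ) = P.map X)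
    (hinj : ∀ᵐ ω ∂P, Function.Injective (X ω)) (j : ι) {k : ℕ} (hk : k ≤ Fintype.card ι) :
    Fintype.card ι * P {ω | rank (X ω) j < k} = k := by
  have hsum := sum_measure_eq_of_ae_card_eq (μ := P) (E := fun i => {ω | rank (X ω) i < k})
    (fun i => hX (measurable_rank i measurableSet_Iio))
    (hinj.mono fun ω hω => by convert card_rank_lt hω hk; rfl)
  simpa [measure_rank_lt_eq_of_exchangeable hX hexch _ j] using hsum

end Exchangeable

theorem split_conformal_coverage_lower_general
    {Ω : Type*} [MeasurableSpace Ω] (P : Measure Ω) [IsProbabilityMeasure P]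
    (N : ℕ) (S : Fin (N + 1) → Ω → ℝ)
    (hmeas : ∀ i, Measurable (S i))
    (hexch : ∀ σ : Equiv.Perm (Fin (N + 1)),
      P.map (fun ω => fun i => S (σ i) ω) = P.map (fun ω => fun i => S i ω))
    (hdistinct : ∀ᵐ ω ∂P, Function.Injective fun i => S i ω)
    (α : ℝ)
    (hk : ⌈((N : ℝ) + 1) * (1 - α)⌉₊ ≤ N) :
    ENNReal.ofReal (1 - α) ≤
      P {ω | S (Fin.last N) ω ≤
        kthSmallest (fun i : Fin N => S i.castSucc ω) ⌈((N : ℝ) + 1) * (1 - α)⌉₊} := by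
  set k := ⌈((N : ℝ) + 1) * (1 - α)⌉₊ with hk_def
  rcases Nat.eq_zero_or_pos k with hk₀ | hk₁
  · have : 1 - α ≤ 0 := by
      rw [hk_def, Nat.ceil_eq_zero] at hk₀
      nlinarith
    simp [ENNReal.ofReal_eq_zero.2 this]
  set X : Ω → Fin (N + 1) → ℝ := fun ω i => S i ω
  have hcoverage : (N + 1 : ℝ≥0∞) * P {ω | rank (X ω) (Fin.last N) < k} = k := by
    simpa using card_mul_measure_rank_lt (measurable_pi_lambda _ hmeas) hexch hdistinct
      (Fin.last N) (k := k) (by simp; omega)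
  have hevent : {ω | S (Fin.last N) ω ≤ kthSmallest (fun i : Fin N => S i.castSucc ω) k} =
      {ω | rank (X ω) (Fin.last N) < k} :=
    Set.ext fun ω => last_le_kthSmallest_iff (X ω) hk₁ hk
  rw [hevent, ← ENNReal.mul_le_mul_iff_right (a := N + 1) (by simp) (by simp), hcoverage,
    ← ENNReal.ofReal_natCast k, ← ENNReal.ofReal_natCast N, ← ENNReal.ofReal_one,
    ← ENNReal.ofReal_add (by positivity) zero_le_one, ← ENNReal.ofReal_mul (by positivity)]
  exact ENNReal.ofReal_le_ofReal (Nat.le_ceil _)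

/-- Split conformal prediction lower coverage bound: if the `N` calibration scores together
with the test score are exchangeable and almost surely distinct, and `q̂` is the
`⌈(N+1)(1-α)⌉`-th smallest calibration score, then `P(S_test ≤ q̂) ≥ 1 - α`. -/
theorem split_conformal_coverage_lower
    {Ω : Type*} [MeasurableSpace Ω] (P : Measure Ω) [IsProbabilityMeasure P]
    (N : ℕ) (hN : 0 < N) (S : Fin (N + 1) → Ω → ℝ)
    (hmeas : ∀ i, Measurable (S i))
    (hexch : ∀ σ : Equiv.Perm (Fin (N + 1)),
      P.map (fun ω => fun i => S (σ i) ω) = P.map (fun ω => fun i => S i ω))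
    (hdistinct : ∀ᵐ ω ∂P, Function.Injective fun i => S i ω)
    (α : ℝ) (hα : α ∈ Set.Ioo (0 : ℝ) 1)
    (hk : ⌈((N : ℝ) + 1) * (1 - α)⌉₊ ≤ N) :
    ENNReal.ofReal (1 - α) ≤
      P {ω | S (Fin.last N) ω ≤
        kthSmallest (fun i : Fin N => S i.castSucc ω) ⌈((N : ℝ) + 1) * (1 - α)⌉₊} :=
  split_conformal_coverage_lower_general P N S hmeas hexch hdistinct α hk
end

section
/- Under the same exchangeability assumptions with almost surely distinct scores, P(S_test ≤ q̂) ≤ 1 − α + 1/(N+1), where q̂ is the ⌈(N+1)(1−α)⌉-th smallest of the N calibration scores. -/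
/-!
By exchangeability, the rank of the test score among all `N + 1` scores has the same law as the
rank of any other score. The scores being almost surely distinct, the events "score `j` has
rank `r`" are almost surely disjoint for distinct `j`, so each has probability at most
`1 / (N + 1)`. If the test score is at most the `k`-th smallest calibration score, fewer than `k`
calibration scores lie strictly below it, i.e. its rank is `< k`; this has probability at most
`k / (N + 1) ≤ 1 - α + 1 / (N + 1)` for `k = ⌈(N + 1)(1 - α)⌉`.
-/

open MeasureTheory

open Finset
open scoped ENNReal

section StrictRank

variable {ι α : Type*} [Fintype ι] [LinearOrder α]

def strictRank (v : ι → α) (j : ι) : ℕ := #{i | v i < v j}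

theorem strictRank_lt_strictRank {v : ι → α} {j j' : ι} (h : v j < v j') :
    strictRank v j < strictRank v j' :=
  card_lt_card <| (ssubset_iff_of_subset fun i => by simpa using (·.trans h)).2
    ⟨j, by simpa using h, by simp⟩

theorem strictRank_injective {v : ι → α} (hv : Function.Injective v) :
    Function.Injective (strictRank v) := by
  intro j j' h
  by_contra hne
  rcases (hv.ne hne).lt_or_gt with hlt | hlt
  · exact (strictRank_lt_strictRank hlt).ne h
  · exact (strictRank_lt_strictRank hlt).ne' h

theorem strictRank_comp_perm (v : ι → α) (σ : Equiv.Perm ι) (j : ι) :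
    strictRank (v ∘ σ) j = strictRank v (σ j) :=
  card_equiv σ fun i => by simp

theorem strictRank_last {n : ℕ} (v : Fin (n + 1) → α) :
    strictRank v (Fin.last n) = #{i : Fin n | v i.castSucc < v (Fin.last n)} := by
  rw [strictRank, card_filter, card_filter, Fin.sum_univ_castSucc]
  simp

theorem measurable_strictRank (j : ι) : Measurable fun v : ι → ℝ => strictRank v j := by
  simp only [strictRank, card_filter]
  exact Finset.measurable_sum _ fun i _ =>
    Measurable.ite (measurableSet_lt (measurable_pi_apply i) (measurable_pi_apply j))
      measurable_const measurable_const

end StrictRank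

def Exchangeable {Ω ι β : Type*} [MeasurableSpace Ω] [MeasurableSpace β] (X : ι → Ω → β)
    (P : Measure Ω) : Prop :=
  ∀ σ : Equiv.Perm ι, P.map (fun ω i => X (σ i) ω) = P.map (fun ω i => X i ω)

namespace Exchangeable

variable {Ω ι : Type*} [MeasurableSpace Ω] [Fintype ι] {P : Measure Ω} {X : ι → Ω → ℝ}

theorem measure_strictRank_eq (hexch : Exchangeable X P) (hX : ∀ i, Measurable (X i))
    (r : ℕ) (j j' : ι) :
    P {ω | strictRank (fun i => X i ω) j = r} = P {ω | strictRank (fun i => X i ω) j' = r} := by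
  classical
  set σ := Equiv.swap j j'
  have hA : MeasurableSet {v : ι → ℝ | strictRank v j = r} :=
    measurable_strictRank j (measurableSet_singleton r)
  have hXσ : Measurable fun ω i => X (σ i) ω := measurable_pi_lambda _ fun i => hX (σ i)
  calc P {ω | strictRank (fun i => X i ω) j = r}
      = P.map (fun ω i => X i ω) {v | strictRank v j = r} :=
        (Measure.map_apply (measurable_pi_lambda _ hX) hA).symm
    _ = P.map (fun ω i => X (σ i) ω) {v | strictRank v j = r} := by rw [hexch σ]
    _ = P {ω | strictRank (fun i => X i ω) j' = r} := by
        rw [Measure.map_apply hXσ hA]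
        congr 1; ext ω
        change strictRank ((fun i => X i ω) ∘ σ) j = r ↔ _
        rw [strictRank_comp_perm, Equiv.swap_apply_left]
        exact Iff.rfl

theorem measure_strictRank_eq_le_inv_card [IsProbabilityMeasure P] (hexch : Exchangeable X P)
    (hX : ∀ i, Measurable (X i)) (hinj : ∀ᵐ ω ∂P, Function.Injective fun i => X i ω) (r : ℕ) (j : ι) :
    P {ω | strictRank (fun i => X i ω) j = r} ≤ (Fintype.card ι : ℝ≥0∞)⁻¹ := by
  set A : ι → Set Ω := fun j => {ω | strictRank (fun i => X i ω) j = r}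
  have hAmeas : ∀ j, MeasurableSet (A j) := fun j =>
    (measurable_strictRank j).comp (measurable_pi_lambda _ hX) (measurableSet_singleton r)
  have hAdisj : Pairwise (Function.onFun (AEDisjoint P) A) := fun j j' hne =>
    measure_mono_null (fun ω hω hωinj => hne (strictRank_injective hωinj (hω.1.trans hω.2.symm)))
      (ae_iff.1 hinj)
  have hsum : ∑ j', P (A j') ≤ 1 := by
    simpa [tsum_fintype] using
      tsum_measure_le_measure_univ (fun j => (hAmeas j).nullMeasurableSet) hAdisj
  rw [sum_congr rfl fun j' _ => hexch.measure_strictRank_eq hX r j' j, sum_const,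
    card_univ, nsmul_eq_mul] at hsum
  rwa [ENNReal.le_inv_iff_mul_le, mul_comm]

theorem measure_strictRank_lt_le [IsProbabilityMeasure P] (hexch : Exchangeable X P)
    (hX : ∀ i, Measurable (X i)) (hinj : ∀ᵐ ω ∂P, Function.Injective fun i => X i ω) (k : ℕ) (j : ι) :
    P {ω | strictRank (fun i => X i ω) j < k} ≤ k * (Fintype.card ι : ℝ≥0∞)⁻¹ := by
  have hunion : {ω | strictRank (fun i => X i ω) j < k} =
      ⋃ r ∈ range k, {ω | strictRank (fun i => X i ω) j = r} := by
    ext ω; simp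
  calc P {ω | strictRank (fun i => X i ω) j < k}
      ≤ ∑ r ∈ range k, P {ω | strictRank (fun i => X i ω) j = r} :=
        hunion ▸ measure_biUnion_finset_le _ _
    _ ≤ ∑ r ∈ range k, (Fintype.card ι : ℝ≥0∞)⁻¹ :=
        sum_le_sum fun r _ => hexch.measure_strictRank_eq_le_inv_card hX hinj r j
    _ = k * (Fintype.card ι : ℝ≥0∞)⁻¹ := by simp

end Exchangeable

theorem Fin.card_filter_eq_countP_ofFn {α : Type*} {n : ℕ} (g : Fin n → α) (p : α → Prop)
    [DecidablePred p] : #{i | p (g i)} = (List.ofFn g).countP p := by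
  rw [← Multiset.coe_countP, ← Fin.univ_val_map, Multiset.countP_map, card_def, filter_val]

theorem List.Pairwise.countP_lt_le_of_le_getElem {α : Type*} [LinearOrder α] {l : List α}
    (hl : l.Pairwise (· ≤ ·)) {m : ℕ} (hm : m < l.length) {t : α} (ht : t ≤ l[m]) :
    l.countP (· < t) ≤ m := by
  have hdrop : (l.drop m).countP (· < t) = 0 := by
    rw [List.countP_eq_zero]
    intro x hx
    obtain ⟨i, hi, rfl⟩ := List.mem_iff_getElem.mp hx
    have := hl.rel_get_of_le (a := ⟨m, hm⟩) (b := ⟨m + i, by simp at hi; omega⟩) (by simp)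
    simpa using ht.trans this
  calc l.countP (· < t) = (l.take m).countP (· < t) + (l.drop m).countP (· < t) := by
        rw [← List.countP_append, List.take_append_drop]
    _ ≤ m := by rw [hdrop, add_zero]; exact List.countP_le_length.trans (by simp)

theorem card_filter_lt_lt_of_le_kthSmallest {n k : ℕ} (g : Fin n → ℝ) {t : ℝ} (hk : 0 < k)
    (ht : t ≤ kthSmallest g k) : #{i | g i < t} < k := by
  -- for `k > n`, `kthSmallest g k` is the junk default `0`, but then the count bound is trivial
  by_cases hkn : k ≤ n
  · set l := (List.ofFn g).mergeSort (· ≤ ·)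
    have hlen : k - 1 < l.length := by simp [l]; omega
    rw [kthSmallest, List.getD_eq_getElem _ _ hlen] at ht
    calc #{i | g i < t} = l.countP (· < t) := by
          rw [Fin.card_filter_eq_countP_ofFn g (· < t), (List.mergeSort_perm _ _).countP_eq]
      _ ≤ k - 1 := (List.pairwise_mergeSort' _ _).countP_lt_le_of_le_getElem hlen ht
      _ < k := by omega
  · calc #{i | g i < t} ≤ n := (card_filter_le _ _).trans (by simp)
      _ < k := by omega

theorem natCeil_mul_mul_inv_le_ofReal {m : ℕ} (hm : 0 < m) {x : ℝ} (hx : 0 ≤ x) :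
    (⌈m * x⌉₊ : ℝ≥0∞) * (m : ℝ≥0∞)⁻¹ ≤ ENNReal.ofReal (x + 1 / m) := by
  have hm' : (0 : ℝ) < m := Nat.cast_pos.2 hm
  rw [← ENNReal.ofReal_natCast, ← ENNReal.ofReal_natCast m, ← ENNReal.ofReal_inv_of_pos hm',
    ← ENNReal.ofReal_mul (Nat.cast_nonneg _)]
  refine ENNReal.ofReal_le_ofReal ?_
  calc (⌈m * x⌉₊ : ℝ) * (m : ℝ)⁻¹ ≤ (m * x + 1) * (m : ℝ)⁻¹ := by
        gcongr; exact (Nat.ceil_lt_add_one (by positivity)).le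
    _ = x + 1 / m := by field_simp

theorem split_conformal_coverage_upper_general
    {Ω : Type*} [MeasurableSpace Ω] (P : Measure Ω) [IsProbabilityMeasure P]
    (N : ℕ) (S : Fin (N + 1) → Ω → ℝ)
    (hmeas : ∀ i, Measurable (S i))
    (hexch : ∀ σ : Equiv.Perm (Fin (N + 1)),
      P.map (fun ω => fun i => S (σ i) ω) = P.map (fun ω => fun i => S i ω))
    (hdistinct : ∀ᵐ ω ∂P, Function.Injective fun i => S i ω)
    (α : ℝ) (hα : α ∈ Set.Ioo (0 : ℝ) 1) :
    P {ω | S (Fin.last N) ω ≤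
        kthSmallest (fun i : Fin N => S i.castSucc ω) ⌈((N : ℝ) + 1) * (1 - α)⌉₊} ≤
      ENNReal.ofReal (1 - α + 1 / ((N : ℝ) + 1)) := by
  set k := ⌈((N : ℝ) + 1) * (1 - α)⌉₊
  have hk_pos : 0 < k := Nat.ceil_pos.2 (mul_pos (by positivity) (by linarith [hα.2]))
  have hevent : {ω | S (Fin.last N) ω ≤ kthSmallest (fun i : Fin N => S i.castSucc ω) k} ⊆
      {ω | strictRank (fun i => S i ω) (Fin.last N) < k} := fun ω hω => by
    show _ < k
    rw [strictRank_last]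
    exact card_filter_lt_lt_of_le_kthSmallest _ hk_pos hω
  calc _ ≤ _ := measure_mono hevent
    _ ≤ k * (Fintype.card (Fin (N + 1)) : ℝ≥0∞)⁻¹ :=
        Exchangeable.measure_strictRank_lt_le hexch hmeas hdistinct k _
    _ ≤ _ := by simpa using natCeil_mul_mul_inv_le_ofReal N.succ_pos (sub_nonneg.2 hα.2.le)

/-- Split conformal prediction upper coverage bound: if the `N` calibration scores together
with the test score are exchangeable and almost surely distinct, and `q̂` is the
`⌈(N+1)(1-α)⌉`-th smallest calibration score, then `P(S_test ≤ q̂) ≤ 1 - α + 1/(N+1)`. -/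
theorem split_conformal_coverage_upper
    {Ω : Type*} [MeasurableSpace Ω] (P : Measure Ω) [IsProbabilityMeasure P]
    (N : ℕ) (hN : 0 < N) (S : Fin (N + 1) → Ω → ℝ)
    (hmeas : ∀ i, Measurable (S i))
    (hexch : ∀ σ : Equiv.Perm (Fin (N + 1)),
      P.map (fun ω => fun i => S (σ i) ω) = P.map (fun ω => fun i => S i ω))
    (hdistinct : ∀ᵐ ω ∂P, Function.Injective fun i => S i ω)
    (α : ℝ) (hα : α ∈ Set.Ioo (0 : ℝ) 1)
    (hk : ⌈((N : ℝ) + 1) * (1 - α)⌉₊ ≤ N) :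
    P {ω | S (Fin.last N) ω ≤
        kthSmallest (fun i : Fin N => S i.castSucc ω) ⌈((N : ℝ) + 1) * (1 - α)⌉₊} ≤
      ENNReal.ofReal (1 - α + 1 / ((N : ℝ) + 1)) :=
  split_conformal_coverage_upper_general P N S hmeas hexch hdistinct α hα
end

section
/- Let f : ℝ → ℝ≥0 be a probability density (∫ f = 1) and let t > 0. Among all measurable sets C ⊆ ℝ with ∫_C f ≥ 1 − α, if the superlevel set C* = {y : f(y) > t} satisfies ∫_{C*} f = 1 − α, then C* has minimal Lebesgue measure: for any measurable C with ∫_C f ≥ 1 − α, λ(C) ≥ λ(C*). -/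
/-!
Neyman–Pearson: for `A = {f > t}` the function `(𝟙_A - 𝟙_C) (f - t)` is pointwise nonnegative,
so `∫_C (f - t) ≤ ∫_A (f - t)`, i.e. `t (λ A - λ C) ≤ ∫_A f - ∫_C f ≤ 0`.
All terms are finite once `λ C < ∞` (otherwise there is nothing to prove), since `λ A < ∞` by
Markov's inequality.
-/

open MeasureTheory

section

variable {X : Type*} [MeasurableSpace X] {μ : Measure X} {f : X → ℝ} {s : Set X} {c : ℝ}

lemma setIntegral_sub_const_le_setIntegral_superlevel (hs : MeasurableSet s)
    (hf : AEMeasurable f μ) (hfs : IntegrableOn (fun x ↦ f x - c) s μ)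
    (hfc : IntegrableOn (fun x ↦ f x - c) {x | c < f x} μ) :
    ∫ x in s, (f x - c) ∂μ ≤ ∫ x in {x | c < f x}, (f x - c) ∂μ := by
  have hA : NullMeasurableSet {x | c < f x} μ := nullMeasurableSet_lt aemeasurable_const hf
  rw [← integral_indicator hs, ← integral_indicator₀ hA]
  refine integral_mono (hfs.integrable_indicator hs) (hfc.integrable_indicator₀ hA) fun x ↦ ?_
  by_cases hx : c < f x <;> by_cases hxs : x ∈ s <;>
    simp only [Set.indicator, Set.mem_ofPred_eq, hx, hxs, if_true, if_false] <;> linarith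

lemma setIntegral_sub_const (hs : μ s ≠ ⊤) (hf : IntegrableOn f s μ) :
    ∫ x in s, (f x - c) ∂μ = ∫ x in s, f x ∂μ - μ.real s * c := by
  rw [integral_sub hf (integrableOn_const hs), setIntegral_const, smul_eq_mul]

theorem measure_superlevel_le_of_setIntegral_le (hf : Integrable f μ) (hc : 0 < c)
    (hs : MeasurableSet s) (h : ∫ x in {x | c < f x}, f x ∂μ ≤ ∫ x in s, f x ∂μ) :
    μ {x | c < f x} ≤ μ s := by
  obtain hs_top | hs_fin := eq_or_ne (μ s) ⊤
  · simp [hs_top]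
  have hA_fin : μ {x | c < f x} ≠ ⊤ := (hf.measure_gt_lt_top hc).ne
  have key := setIntegral_sub_const_le_setIntegral_superlevel hs hf.aemeasurable
    (hf.integrableOn.sub (integrableOn_const hs_fin))
    (hf.integrableOn.sub (integrableOn_const hA_fin))
  rw [setIntegral_sub_const hs_fin hf.integrableOn,
    setIntegral_sub_const hA_fin hf.integrableOn] at key
  have : μ.real {x | c < f x} ≤ μ.real s := le_of_mul_le_mul_right (by linarith) hc
  exact (ENNReal.toReal_le_toReal hA_fin hs_fin).1 this

end

theorem superlevel_set_minimal_measure_general (f : ℝ → ℝ) (hf_int : Integrable f) (t : ℝ) (ht : 0 < t)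
    (α : ℝ) (hCstar : ∫ y in {y | f y > t}, f y = 1 - α) :
    ∀ C : Set ℝ, MeasurableSet C → (1 - α ≤ ∫ y in C, f y) →
      volume {y | f y > t} ≤ volume C :=
  fun _ hC hCmass ↦ measure_superlevel_le_of_setIntegral_le hf_int ht hC (hCstar.trans_le hCmass)

/-- Neyman–Pearson-style optimality of density superlevel sets: if `f` is a probability
density, `t > 0`, and the superlevel set `C* = {y : f y > t}` captures exactly mass
`1 - α`, then among all measurable sets capturing mass at least `1 - α`, the set `C*`
has minimal Lebesgue measure. -/
theorem superlevel_set_minimal_measure (f : ℝ → ℝ) (hf_meas : Measurable f)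
    (hf_nonneg : ∀ y, 0 ≤ f y) (hf_int : Integrable f)
    (hf_density : ∫ y, f y = 1) (t : ℝ) (ht : 0 < t) (α : ℝ)
    (hCstar : ∫ y in {y | f y > t}, f y = 1 - α) :
    ∀ C : Set ℝ, MeasurableSet C → (1 - α ≤ ∫ y in C, f y) →
      volume {y | f y > t} ≤ volume C :=
  superlevel_set_minimal_measure_general f hf_int t ht α hCstar
end

section
/- Let P = ⋃_{i=1}^m [a_i, b_i] ⊆ [0,1] with a_i < b_i < a_{i+1}, and let q > 0 satisfy q · λ(P) < 1 where λ(P) = Σ (b_i − a_i). Then there exists a piecewise-linear nonneg. function f on [0,1] with at most 4m + 2 knots such that ∫_0^1 f = 1 and {y ∈ [0,1] : f(y) > q} = ⋃_{i=1}^m (a_i, b_i) up to endpoints (closure equals P). -/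
/-!
Over each `[aᵢ, bᵢ]` put a slope-one trapezoid with base `[aᵢ - ε, bᵢ + ε]` (wings of width `ε`)
and height `ε + θ (bᵢ - aᵢ)`, and scale their sum by `q / ε`: the density crosses the level `q`
exactly at the points `aᵢ, bᵢ`, and it is affine between consecutive points among `0`, `1` and the
`4m` corners. For small `ε` the supports are disjoint. A trapezoid is a combination of four ramps
`max (y - s) 0`, which integrates it in closed form; the mass is continuous in `θ`, below `1` at
`θ = 0` because `q λ(P) < 1`, and at least `1` at `θ = 1/2` once `ε` is small, so the intermediate
value theorem fixes `θ`.
-/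

open MeasureTheory Set Topology

def AffineOn (f : ℝ → ℝ) (s : Set ℝ) : Prop := ∃ c d : ℝ, ∀ y ∈ s, f y = c * y + d

namespace AffineOn

variable {f g : ℝ → ℝ} {s : Set ℝ}

theorem congr (hf : AffineOn f s) (hfg : EqOn f g s) : AffineOn g s := by
  obtain ⟨c, d, h⟩ := hf
  exact ⟨c, d, fun y hy => (hfg hy).symm.trans (h y hy)⟩

theorem add (hf : AffineOn f s) (hg : AffineOn g s) : AffineOn (fun y => f y + g y) s := by
  obtain ⟨c, d, hf⟩ := hf
  obtain ⟨c', d', hg⟩ := hg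
  exact ⟨c + c', d + d', fun y hy => by simp only [hf y hy, hg y hy]; ring⟩

theorem sub (hf : AffineOn f s) (hg : AffineOn g s) : AffineOn (fun y => f y - g y) s := by
  obtain ⟨c, d, hf⟩ := hf
  obtain ⟨c', d', hg⟩ := hg
  exact ⟨c - c', d - d', fun y hy => by simp only [hf y hy, hg y hy]; ring⟩

theorem const_mul (hf : AffineOn f s) (a : ℝ) : AffineOn (fun y => a * f y) s := by
  obtain ⟨c, d, hf⟩ := hf
  exact ⟨a * c, a * d, fun y hy => by simp only [hf y hy]; ring⟩

theorem sum {ι : Type*} (t : Finset ι) {F : ι → ℝ → ℝ} (hF : ∀ i ∈ t, AffineOn (F i) s) :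
    AffineOn (fun y => ∑ i ∈ t, F i y) s := by
  classical
  induction t using Finset.induction_on with
  | empty => exact ⟨0, 0, fun y _ => by simp⟩
  | insert i t hi ih =>
    simp only [Finset.sum_insert hi]
    exact (hF i (Finset.mem_insert_self i t)).add
      (ih fun j hj => hF j (Finset.mem_insert_of_mem hj))

end AffineOn

def ramp (s y : ℝ) : ℝ := max (y - s) 0

theorem ramp_nonneg (s y : ℝ) : 0 ≤ ramp s y := le_max_right _ _

theorem continuous_ramp (s : ℝ) : Continuous (ramp s) :=
  (continuous_id.sub continuous_const).max continuous_const

theorem affineOn_ramp {s x y : ℝ} (hs : s ∉ Ioo x y) : AffineOn (ramp s) (Icc x y) := by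
  rcases le_or_gt s x with h | h
  · exact ⟨1, -s, fun z hz => by rw [ramp, max_eq_left (by linarith [hz.1])]; ring⟩
  · have hys : y ≤ s := not_lt.1 fun h' => hs ⟨h, h'⟩
    exact ⟨0, 0, fun z hz => by rw [ramp, max_eq_right (by linarith [hz.2])]; ring⟩

theorem hasDerivAt_ramp_sq_div_two (s t : ℝ) :
    HasDerivAt (fun y => ramp s y ^ 2 / 2) (ramp s t) t := by
  have hsq : ∀ z, HasDerivAt (fun y => (y - s) ^ 2 / 2) (z - s) z := fun z => by
    simpa using (((hasDerivAt_id z).sub_const s).pow 2).div_const 2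
  have hleft : ∀ y ∈ Iic s, ramp s y ^ 2 / 2 = 0 := fun y hy => by
    rw [ramp, max_eq_right (sub_nonpos.2 hy)]; ring
  have hright : ∀ y ∈ Ici s, ramp s y ^ 2 / 2 = (y - s) ^ 2 / 2 := fun y hy => by
    rw [ramp, max_eq_left (sub_nonneg.2 hy)]
  rcases lt_trichotomy t s with h | rfl | h
  · rw [show ramp s t = 0 from max_eq_right (by linarith)]
    exact (hasDerivAt_const t (0 : ℝ)).congr_of_eventuallyEq
      (Filter.eventuallyEq_of_mem (Iic_mem_nhds h) hleft)
  · have h0 : ramp t t = 0 := by simp [ramp]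
    rw [h0, ← hasDerivWithinAt_univ, ← Iic_union_Ici]
    refine HasDerivWithinAt.union ?_ ?_
    · exact (hasDerivWithinAt_const t _ 0).congr hleft (hleft t (mem_Iic.2 le_rfl))
    · simpa using (hsq t).hasDerivWithinAt.congr hright (hright t (mem_Ici.2 le_rfl))
  · rw [show ramp s t = t - s from max_eq_left (by linarith)]
    exact (hsq t).congr_of_eventuallyEq (Filter.eventuallyEq_of_mem (Ici_mem_nhds h) hright)

theorem integral_ramp (s x y : ℝ) :
    ∫ t in x..y, ramp s t = (ramp s y ^ 2 - ramp s x ^ 2) / 2 := by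
  rw [intervalIntegral.integral_eq_sub_of_hasDerivAt (fun t _ => hasDerivAt_ramp_sq_div_two s t)
    ((continuous_ramp s).intervalIntegrable x y)]
  ring

theorem ramp_sq_add_ramp_sq (s y : ℝ) : ramp s y ^ 2 + ramp y s ^ 2 = (y - s) ^ 2 := by
  rcases le_total s y with h | h
  · rw [ramp, ramp, max_eq_left (by linarith), max_eq_right (by linarith)]; ring
  · rw [ramp, ramp, max_eq_right (by linarith), max_eq_left (by linarith)]; ring

def trapezoid (u v h y : ℝ) : ℝ := max (min h (min (y - u) (v - y))) 0

noncomputable def trapezoidKinks (u v h : ℝ) : Finset ℝ := {u, u + h, v - h, v}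

section Trapezoid

variable {u v h : ℝ}

theorem trapezoid_nonneg (y : ℝ) : 0 ≤ trapezoid u v h y := le_max_right _ _

theorem continuous_trapezoid : Continuous (trapezoid u v h) := by
  unfold trapezoid; fun_prop

theorem trapezoid_eq_zero {y : ℝ} (hy : y ∉ Ioo u v) : trapezoid u v h y = 0 := by
  have : min (y - u) (v - y) ≤ 0 := by
    rcases le_or_gt y u with h' | h'
    · exact (min_le_left _ _).trans (by linarith)
    · exact (min_le_right _ _).trans (by linarith [not_lt.1 fun h'' => hy ⟨h', h''⟩])
  exact max_eq_right ((min_le_right _ _).trans this)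

theorem lt_trapezoid_iff {ε y : ℝ} (hε : 0 ≤ ε) (hεh : ε < h) :
    ε < trapezoid u v h y ↔ y ∈ Ioo (u + ε) (v - ε) := by
  simp only [trapezoid, lt_max_iff, lt_min_iff, mem_Ioo]
  constructor
  · rintro (⟨-, h₁, h₂⟩ | h₀)
    · constructor <;> linarith
    · linarith
  · rintro ⟨h₁, h₂⟩
    exact Or.inl ⟨hεh, by linarith, by linarith⟩

theorem trapezoid_eq_ramps (hh : 0 ≤ h) (huv : 2 * h ≤ v - u) (y : ℝ) :
    trapezoid u v h y = ramp u y - ramp (u + h) y - ramp (v - h) y + ramp v y := by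
  simp only [trapezoid, ramp, max_def, min_def]
  split_ifs <;> linarith

theorem affineOn_trapezoid (hh : 0 ≤ h) (huv : 2 * h ≤ v - u) {x y : ℝ}
    (hk : ∀ k ∈ trapezoidKinks u v h, k ∉ Ioo x y) : AffineOn (trapezoid u v h) (Icc x y) := by
  simp only [trapezoidKinks, Finset.mem_insert, Finset.mem_singleton, forall_eq_or_imp,
    forall_eq] at hk
  obtain ⟨h₁, h₂, h₃, h₄⟩ := hk
  refine ((((affineOn_ramp h₁).sub (affineOn_ramp h₂)).sub (affineOn_ramp h₃)).add
    (affineOn_ramp h₄)).congr fun z _ => ?_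
  exact (trapezoid_eq_ramps hh huv z).symm

/-- `ramp u x` and `ramp z v` are the widths of the parts of the two slope-one wings that lie
outside `[x, z]`. -/
theorem integral_trapezoid (hh : 0 ≤ h) (huv : 2 * h ≤ v - u) {x z : ℝ} (hx : x ≤ u + h)
    (hz : v - h ≤ z) :
    ∫ y in x..z, trapezoid u v h y = h * (v - u - h) - (ramp u x ^ 2 + ramp z v ^ 2) / 2 := by
  have hi : ∀ s, IntervalIntegrable (ramp s) volume x z := fun s =>
    (continuous_ramp s).intervalIntegrable x z
  simp_rw [trapezoid_eq_ramps hh huv]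
  rw [intervalIntegral.integral_add (((hi _).sub (hi _)).sub (hi _)) (hi _),
    intervalIntegral.integral_sub ((hi _).sub (hi _)) (hi _),
    intervalIntegral.integral_sub (hi _) (hi _)]
  simp only [integral_ramp]
  have hv := ramp_sq_add_ramp_sq v z
  rw [show ramp (u + h) x = 0 from max_eq_right (by linarith),
    show ramp (v - h) x = 0 from max_eq_right (by linarith),
    show ramp v x = 0 from max_eq_right (by linarith),
    show ramp u z = z - u from max_eq_left (by linarith),
    show ramp (u + h) z = z - (u + h) from max_eq_left (by linarith),
    show ramp (v - h) z = z - (v - h) from max_eq_left (by linarith)]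
  linear_combination hv / 2

end Trapezoid

theorem lt_sum_iff_exists_lt_of_pairwise {ι M : Type*} [Fintype ι] [AddCommMonoid M]
    [LinearOrder M] [IsOrderedAddMonoid M] {g : ι → M} {c : M} (hc : 0 ≤ c) (hg : ∀ i, 0 ≤ g i)
    (hdisj : Pairwise fun i j => g i = 0 ∨ g j = 0) : c < ∑ i, g i ↔ ∃ i, c < g i := by
  classical
  refine ⟨fun hlt => ?_, fun ⟨i, hi⟩ =>
    hi.trans_le (Finset.single_le_sum (fun j _ => hg j) (Finset.mem_univ i))⟩
  by_cases hz : ∃ j, g j ≠ 0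
  · obtain ⟨j, hj⟩ := hz
    refine ⟨j, ?_⟩
    rwa [Finset.sum_eq_single j (fun i _ hij => (hdisj hij).resolve_right hj)
      (fun h => absurd (Finset.mem_univ j) h)] at hlt
  · push Not at hz
    simp only [hz, Finset.sum_const_zero] at hlt
    exact absurd hc (not_le.2 hlt)

theorem Fin.right_lt_left_of_lt {α : Type*} [Preorder α] {m : ℕ} {a b : Fin m → α}
    (hab : ∀ i, a i ≤ b i) (hsep : ∀ i : Fin m, ∀ h : (i : ℕ) + 1 < m, b i < a ⟨(i : ℕ) + 1, h⟩)
    {i j : Fin m} (hij : i < j) : b i < a j := by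
  suffices ∀ n (hn : n < m), (i : ℕ) < n → b i < a ⟨n, hn⟩ from this j j.isLt hij
  intro n
  induction n with
  | zero => intro _ h; omega
  | succ n ih =>
    intro hn hin
    have hstep := hsep ⟨n, by omega⟩ hn
    rcases (Nat.lt_succ_iff.1 hin).lt_or_eq with h | h
    · exact ((ih (by omega) h).trans_le (hab _)).trans hstep
    · obtain rfl := h
      exact hstep

theorem exists_knots_of_affineOn {f : ℝ → ℝ} {x₀ x₁ : ℝ} (h₀₁ : x₀ < x₁) (K : Finset ℝ)
    (hf : ∀ x y, (∀ k ∈ K, k ∉ Ioo x y) → AffineOn f (Icc x y)) :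
    ∃ (N : ℕ) (t : Fin (N + 1) → ℝ), N + 1 ≤ K.card + 2 ∧ StrictMono t ∧ t 0 = x₀ ∧
      t (Fin.last N) = x₁ ∧ ∀ i : Fin N, AffineOn f (Icc (t i.castSucc) (t i.succ)) := by
  classical
  set S := insert x₀ (insert x₁ (K.filter (· ∈ Ioo x₀ x₁)))
  have hS : ∀ s ∈ S, s ∈ Icc x₀ x₁ := by
    simp only [S, Finset.mem_insert, Finset.mem_filter]
    rintro s (rfl | rfl | ⟨-, hs⟩)
    exacts [⟨le_rfl, h₀₁.le⟩, ⟨h₀₁.le, le_rfl⟩, Ioo_subset_Icc_self hs]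
  have hx₀ : x₀ ∈ S := Finset.mem_insert_self _ _
  have hx₁ : x₁ ∈ S := Finset.mem_insert_of_mem (Finset.mem_insert_self _ _)
  obtain ⟨N, hN⟩ : ∃ N, S.card = N + 1 := ⟨S.card - 1, by have := Finset.card_pos.2 ⟨_, hx₀⟩; omega⟩
  set t := S.orderEmbOfFin hN
  have ht : ∀ j, t j ∈ S := fun j => by
    rw [← Finset.mem_coe, ← Finset.range_orderEmbOfFin S hN]; exact ⟨j, rfl⟩
  refine ⟨N, t, ?_, t.strictMono, ?_, ?_, fun i => hf _ _ fun k hk hkI => ?_⟩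
  · rw [← hN]
    exact (Finset.card_insert_le _ _).trans (Nat.add_le_add_right
      ((Finset.card_insert_le _ _).trans (Nat.add_le_add_right (Finset.card_filter_le _ _) 1)) 1)
  · exact (Finset.orderEmbOfFin_zero hN N.succ_pos).trans
      (le_antisymm (Finset.min'_le _ _ hx₀) (Finset.le_min' _ _ _ fun s hs => (hS s hs).1))
  · exact (Finset.orderEmbOfFin_last hN N.succ_pos).trans
      (le_antisymm (Finset.max'_le _ _ _ fun s hs => (hS s hs).2) (Finset.le_max' _ _ hx₁))
  · have hkS : k ∈ S := by
      refine Finset.mem_insert_of_mem (Finset.mem_insert_of_mem (Finset.mem_filter.2 ⟨hk, ?_⟩))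
      exact ⟨(hS _ (ht _)).1.trans_lt hkI.1, hkI.2.trans_le (hS _ (ht _)).2⟩
    obtain ⟨j, rfl⟩ : ∃ j, t j = k := by
      rw [← Set.mem_range, Finset.range_orderEmbOfFin]; exact hkS
    have h₁ := t.lt_iff_lt.1 hkI.1
    have h₂ := t.lt_iff_lt.1 hkI.2
    simp only [Fin.lt_def, Fin.val_castSucc, Fin.val_succ] at h₁ h₂
    omega

section TrapezoidSum

variable {ι : Type*} [Fintype ι] (a b : ι → ℝ) (ε θ : ℝ)

def trapezoidSum (y : ℝ) : ℝ :=
  ∑ i, trapezoid (a i - ε) (b i + ε) (ε + θ * (b i - a i)) y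

noncomputable def trapezoidSumKinks : Finset ℝ :=
  Finset.univ.biUnion fun i => trapezoidKinks (a i - ε) (b i + ε) (ε + θ * (b i - a i))

theorem trapezoidSum_nonneg (y : ℝ) : 0 ≤ trapezoidSum a b ε θ y :=
  Finset.sum_nonneg fun _ _ => trapezoid_nonneg y

theorem continuous_trapezoidSum : Continuous (trapezoidSum a b ε θ) :=
  continuous_finsetSum _ fun _ _ => continuous_trapezoid

theorem card_trapezoidSumKinks_le : (trapezoidSumKinks a b ε θ).card ≤ 4 * Fintype.card ι := by
  calc _ ≤ ∑ i, (trapezoidKinks (a i - ε) (b i + ε) (ε + θ * (b i - a i))).card :=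
        Finset.card_biUnion_le
    _ ≤ ∑ _i : ι, 4 := Finset.sum_le_sum fun i _ => Finset.card_le_four
    _ = 4 * Fintype.card ι := by simp [mul_comm]

variable {a b ε θ}

theorem affineOn_trapezoidSum (hab : ∀ i, a i ≤ b i) (hε : 0 ≤ ε) (hθ : θ ∈ Icc (0 : ℝ) (1 / 2))
    {x y : ℝ} (hk : ∀ k ∈ trapezoidSumKinks a b ε θ, k ∉ Ioo x y) :
    AffineOn (trapezoidSum a b ε θ) (Icc x y) := by
  refine AffineOn.sum _ fun i _ => affineOn_trapezoid ?_ ?_ fun k hki => hk k ?_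
  · nlinarith [hab i, hθ.1]
  · nlinarith [hab i, hθ.2]
  · exact Finset.mem_biUnion.2 ⟨i, Finset.mem_univ i, hki⟩

theorem integral_trapezoidSum (ha0 : ∀ i, 0 ≤ a i) (hab : ∀ i, a i ≤ b i) (hb1 : ∀ i, b i ≤ 1)
    (hε : 0 ≤ ε) (hθ : θ ∈ Icc (0 : ℝ) (1 / 2)) :
    ∫ y in (0 : ℝ)..1, trapezoidSum a b ε θ y =
      ∑ i, ((ε + θ * (b i - a i)) * ((b i - a i) + ε - θ * (b i - a i)) -
        (ramp (a i - ε) 0 ^ 2 + ramp 1 (b i + ε) ^ 2) / 2) := by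
  unfold trapezoidSum
  rw [intervalIntegral.integral_finsetSum fun i _ =>
    continuous_trapezoid.intervalIntegrable 0 1]
  refine Finset.sum_congr rfl fun i _ => ?_
  rw [integral_trapezoid (by nlinarith [hab i, hθ.1]) (by nlinarith [hab i, hθ.2])
    (by nlinarith [ha0 i, hab i, hθ.1]) (by nlinarith [hb1 i, hab i, hθ.1])]
  ring

theorem lt_trapezoidSum_iff [LinearOrder ι] (hab : ∀ i, a i < b i)
    (hsep : ∀ i j, i < j → b i + 2 * ε ≤ a j) (hε : 0 ≤ ε) (hθ : 0 < θ) {y : ℝ} :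
    ε < trapezoidSum a b ε θ y ↔ ∃ i, y ∈ Ioo (a i) (b i) := by
  have hdisj : ∀ i j, i < j → trapezoid (a i - ε) (b i + ε) (ε + θ * (b i - a i)) y = 0 ∨
      trapezoid (a j - ε) (b j + ε) (ε + θ * (b j - a j)) y = 0 := fun i j hij => by
    by_cases hy : y ∈ Ioo (a i - ε) (b i + ε)
    · exact Or.inr (trapezoid_eq_zero fun hy' => by linarith [hy.2, hy'.1, hsep i j hij])
    · exact Or.inl (trapezoid_eq_zero hy)
  rw [trapezoidSum, lt_sum_iff_exists_lt_of_pairwise hε (fun _ => trapezoid_nonneg y)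
    fun i j hij => (hij.lt_or_gt.elim (hdisj i j) fun h => (hdisj j i h).symm)]
  simp only [lt_trapezoid_iff hε (lt_add_of_pos_right ε (mul_pos hθ (sub_pos.2 (hab _)))),
    sub_add_cancel, add_sub_cancel_right]

theorem exists_integral_trapezoidSum_eq_one {q : ℝ} (ha0 : ∀ i, 0 ≤ a i) (hab : ∀ i, a i ≤ b i)
    (hb1 : ∀ i, b i ≤ 1) (hq : 0 < q) (hε : 0 < ε)
    (hlow : q * (∑ i, (b i - a i) + Fintype.card ι * ε) < 1)
    (hhigh : 4 * ε ≤ q * ∑ i, (b i - a i) ^ 2) :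
    ∃ θ ∈ Ioc (0 : ℝ) (1 / 2), q / ε * ∫ y in (0 : ℝ)..1, trapezoidSum a b ε θ y = 1 := by
  set M : ℝ → ℝ := fun θ => q / ε * ∑ i, ((ε + θ * (b i - a i)) *
    ((b i - a i) + ε - θ * (b i - a i)) - (ramp (a i - ε) 0 ^ 2 + ramp 1 (b i + ε) ^ 2) / 2)
  have hM : ∀ θ ∈ Icc (0 : ℝ) (1 / 2), q / ε * ∫ y in (0 : ℝ)..1, trapezoidSum a b ε θ y = M θ :=
    fun θ hθ => by rw [integral_trapezoidSum ha0 hab hb1 hε.le hθ]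
  have hτ : ∀ i, 0 ≤ (ramp (a i - ε) 0 ^ 2 + ramp 1 (b i + ε) ^ 2) / 2 ∧
      (ramp (a i - ε) 0 ^ 2 + ramp 1 (b i + ε) ^ 2) / 2 ≤ ε ^ 2 := fun i => by
    have h₁ : ramp (a i - ε) 0 ≤ ε := max_le (by linarith [ha0 i]) hε.le
    have h₂ : ramp 1 (b i + ε) ≤ ε := max_le (by linarith [hb1 i]) hε.le
    constructor
    · positivity
    · nlinarith [pow_le_pow_left₀ (ramp_nonneg _ _) h₁ 2, pow_le_pow_left₀ (ramp_nonneg _ _) h₂ 2]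
  have hM0 : M 0 < 1 := calc
    M 0 ≤ q / ε * ∑ i, ε * ((b i - a i) + ε) := by
      simp only [M]; gcongr with i; nlinarith [(hτ i).1]
    _ = q * (∑ i, (b i - a i) + Fintype.card ι * ε) := by
      rw [← Finset.mul_sum, Finset.sum_add_distrib, Finset.sum_const, Finset.card_univ,
        nsmul_eq_mul]
      field_simp
    _ < 1 := hlow
  have hM1 : 1 ≤ M (1 / 2) := calc
    1 ≤ q / ε * ∑ i, (b i - a i) ^ 2 / 4 := by
      rw [← Finset.sum_div, div_mul_div_comm, le_div_iff₀ (by positivity)]; linarith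
    _ ≤ M (1 / 2) := by
      simp only [M]; gcongr with i; nlinarith [(hτ i).2, mul_nonneg hε.le (sub_nonneg.2 (hab i))]
  obtain ⟨θ, hθ, hMθ⟩ :=
    intermediate_value_Icc (by norm_num) (by fun_prop : Continuous M).continuousOn ⟨hM0.le, hM1⟩
  refine ⟨θ, ⟨hθ.1.lt_of_ne ?_, hθ.2⟩, (hM θ hθ).trans hMθ⟩
  rintro rfl
  exact hM0.ne hMθ

theorem exists_wing_width [LinearOrder ι] {q : ℝ} (hsep : ∀ i j, i < j → b i < a j)
    (hlow : q * ∑ i, (b i - a i) < 1) (hhigh : 0 < q * ∑ i, (b i - a i) ^ 2) :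
    ∃ ε > 0, (∀ i j, i < j → b i + 2 * ε ≤ a j) ∧
      q * (∑ i, (b i - a i) + Fintype.card ι * ε) < 1 ∧ 4 * ε ≤ q * ∑ i, (b i - a i) ^ 2 := by
  have hgap : ∀ᶠ ε in 𝓝[>] (0 : ℝ), ∀ i j, i < j → b i + 2 * ε ≤ a j :=
    Filter.eventually_all.2 fun i => Filter.eventually_all.2 fun j =>
      Filter.eventually_imp_distrib_left.2 fun hij =>
        nhdsWithin_le_nhds <| (eventually_lt_nhds (show (0 : ℝ) < (a j - b i) / 2 by
          linarith [hsep i j hij])).mono fun ε hε => by linarith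
  have hlow' : ∀ᶠ ε in 𝓝[>] (0 : ℝ), q * (∑ i, (b i - a i) + Fintype.card ι * ε) < 1 :=
    nhdsWithin_le_nhds <| ContinuousAt.eventually_lt (by fun_prop) continuousAt_const
      (by simpa using hlow)
  have hhigh' : ∀ᶠ ε in 𝓝[>] (0 : ℝ), 4 * ε ≤ q * ∑ i, (b i - a i) ^ 2 :=
    nhdsWithin_le_nhds <| (eventually_lt_nhds (by positivity :
      (0 : ℝ) < (q * ∑ i, (b i - a i) ^ 2) / 4)).mono fun ε hε => by linarith
  exact ((eventually_mem_nhdsWithin : ∀ᶠ ε in 𝓝[>] (0 : ℝ), ε ∈ Ioi 0).and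
    (hgap.and (hlow'.and hhigh'))).exists

end TrapezoidSum

/-- Expressiveness of SPICE-ND prediction sets: for any finite union
`P = ⋃ᵢ [aᵢ, bᵢ] ⊆ [0,1]` of disjoint closed intervals and any threshold `q > 0` with
`q · λ(P) < 1`, there is a nonnegative continuous piecewise-linear density `f` on `[0,1]`
with at most `4m + 2` knots whose superlevel set at level `q` has closure exactly `P`. -/
theorem spice_nd_expressiveness (m : ℕ) (hm : 0 < m) (a b : Fin m → ℝ)
    (ha0 : ∀ i, 0 ≤ a i) (hab : ∀ i, a i < b i) (hb1 : ∀ i, b i ≤ 1)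
    (hsep : ∀ i : Fin m, ∀ h : (i : ℕ) + 1 < m, b i < a ⟨(i : ℕ) + 1, h⟩)
    (q : ℝ) (hq : 0 < q) (hqP : q * (∑ i, (b i - a i)) < 1) :
    ∃ (K : ℕ) (t : Fin (K + 1) → ℝ) (f : ℝ → ℝ),
      K + 1 ≤ 4 * m + 2 ∧
      StrictMono t ∧ t 0 = 0 ∧ t (Fin.last K) = 1 ∧
      ContinuousOn f (Set.Icc 0 1) ∧
      (∀ y ∈ Set.Icc (0:ℝ) 1, 0 ≤ f y) ∧
      (∀ i : Fin K, ∃ c d : ℝ, ∀ y ∈ Set.Icc (t i.castSucc) (t i.succ), f y = c * y + d) ∧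
      (∫ y in (0:ℝ)..1, f y) = 1 ∧
      closure {y ∈ Set.Icc (0:ℝ) 1 | f y > q} = ⋃ i, Set.Icc (a i) (b i) := by
  have hlt : ∀ i j : Fin m, i < j → b i < a j := fun i j =>
    Fin.right_lt_left_of_lt (fun i => (hab i).le) hsep
  have hsq : 0 < q * ∑ i, (b i - a i) ^ 2 := mul_pos hq <|
    Finset.sum_pos (fun i _ => by nlinarith [hab i]) ⟨⟨0, hm⟩, Finset.mem_univ _⟩
  obtain ⟨ε, hε, hgap, hlow, hhigh⟩ := exists_wing_width hlt hqP hsq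
  obtain ⟨θ, hθ, hmass⟩ :=
    exists_integral_trapezoidSum_eq_one ha0 (fun i => (hab i).le) hb1 hq hε hlow hhigh
  obtain ⟨K, t, hK, ht, ht0, ht1, haff⟩ := exists_knots_of_affineOn zero_lt_one
    (trapezoidSumKinks a b ε θ) fun x y hk => (affineOn_trapezoidSum (fun i => (hab i).le)
      hε.le (Ioc_subset_Icc_self hθ) hk).const_mul (q / ε)
  have hsuper : {y ∈ Icc (0 : ℝ) 1 | q / ε * trapezoidSum a b ε θ y > q} =
      ⋃ i, Ioo (a i) (b i) := by
    ext y
    rw [mem_ofPred_eq, gt_iff_lt, div_mul_eq_mul_div, lt_div_iff₀ hε,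
      mul_lt_mul_iff_right₀ hq, lt_trapezoidSum_iff hab hgap hε.le hθ.1, mem_iUnion]
    exact and_iff_right_of_imp fun ⟨i, hi⟩ =>
      ⟨(ha0 i).trans hi.1.le, hi.2.le.trans (hb1 i)⟩
  refine ⟨K, t, fun y => q / ε * trapezoidSum a b ε θ y, ?_, ht, ht0, ht1,
    (continuous_const.mul (continuous_trapezoidSum a b ε θ)).continuousOn,
    fun y _ => mul_nonneg (div_pos hq hε).le (trapezoidSum_nonneg a b ε θ y), haff, ?_, ?_⟩
  · have := card_trapezoidSumKinks_le a b ε θ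
    rw [Fintype.card_fin] at this
    omega
  · rwa [intervalIntegral.integral_const_mul]
  · rw [hsuper, closure_iUnion_of_finite]
    exact iUnion_congr fun i => closure_Ioo (hab i).ne
end
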